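/- In a gentle quiver (Q, R), the set of maximal relation-avoiding walks (maximal paths with no length-two subpath in R, together with trivial paths at vertices not lying on any arrow of such a path) induces a partition property: every arrow of Q lies on exactly one maximal relation-avoiding path. -/

import Mathlib

def AtMostTwo {α : Type*} (P : α → Prop) : Prop :=
  ∀ a b c, P a → P b → P c → a = b ∨ a = c ∨ b = c

structure IsGentle {V A : Type*} (s t : A → V) (R : A → A → Prop) : Prop where
  rel_comp : ∀ a b, R a b → t a = s b
  out_two : ∀ v : V, AtMostTwo (fun a => s a = v)
  in_two : ∀ v : V, AtMostTwo (fun a => t a = v)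
  unique_nonrel_post : ∀ a : A, {b | t a = s b ∧ ¬ R a b}.Subsingleton
  unique_nonrel_pre : ∀ a : A, {c | t c = s a ∧ ¬ R c a}.Subsingleton
  unique_rel_post : ∀ a : A, {b | R a b}.Subsingleton
  unique_rel_pre : ∀ a : A, {c | R c a}.Subsingleton

/-- A nonempty relation-avoiding path, encoded as a list of arrows read left-to-right. -/
def IsRAPath {V A : Type*} (s t : A → V) (R : A → A → Prop) (l : List A) : Prop :=
  l ≠ [] ∧ l.Chain' (fun a b => t a = s b ∧ ¬ R a b)

/-- A maximal relation-avoiding path: it cannot be extended on either side. -/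
def IsMaximalRAPath {V A : Type*} (s t : A → V) (R : A → A → Prop) (l : List A) : Prop :=
  IsRAPath s t R l ∧ (∀ b : A, ¬ IsRAPath s t R (l ++ [b])) ∧
    (∀ b : A, ¬ IsRAPath s t R (b :: l))

/-- Uniqueness of maximal chains extending to the right from a fixed start, for a relation
with unique successors. -/
private lemma maxchain_unique {A : Type*} (r : A → A → Prop)
    (hr : ∀ ⦃a b b'⦄, r a b → r a b' → b = b') :
    ∀ (v v' : List A) (a : A), (a :: v).Chain' r → (a :: v').Chain' r →
      (∀ x, (a :: v).getLast? = some x → ∀ b, ¬ r x b) →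
      (∀ x, (a :: v').getLast? = some x → ∀ b, ¬ r x b) → v = v' := by
  intro v
  induction v with
  | nil =>
    intro v' a h₁ h₂ hm₁ hm₂
    cases v' with
    | nil => rfl
    | cons c' v₂' => exact absurd (List.isChain_cons_cons.1 h₂).1 (hm₁ a (by simp) c')
  | cons c v₂ ih =>
    intro v' a h₁ h₂ hm₁ hm₂
    cases v' with
    | nil => exact absurd (List.isChain_cons_cons.1 h₁).1 (hm₂ a (by simp) c)
    | cons c' v₂' =>
      obtain ⟨hac, h₁'⟩ := List.isChain_cons_cons.1 h₁
      obtain ⟨hac', h₂'⟩ := List.isChain_cons_cons.1 h₂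
      obtain rfl : c = c' := hr hac hac'
      rw [ih v₂' c h₁' h₂' (fun x hx => hm₁ x (by rw [List.getLast?_cons_cons]; exact hx))
        (fun x hx => hm₂ x (by rw [List.getLast?_cons_cons]; exact hx))]

private lemma split_pair {A : Type*} (b : A) (l : List A) (hl : List.Sublist [b, b] l) :
    ∃ u v w, l = u ++ b :: v ++ b :: w := by
  induction l with
  | nil => simp at hl
  | cons c l ih =>
    cases hl with
    | cons _ h' =>
      obtain ⟨u, v, w, rfl⟩ := ih h'
      exact ⟨c :: u, v, w, rfl⟩
    | cons_cons _ h' =>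
      obtain ⟨v, w, rfl⟩ := List.append_of_mem (List.singleton_sublist.1 h')
      exact ⟨[], v, w, rfl⟩

/-- In a finite dimensional gentle algebra (no relation-avoiding cyclic paths), every arrow
lies on exactly one maximal relation-avoiding path. -/
theorem gentle_arrow_on_unique_maximal_path {V A : Type*} [Finite V] [Finite A]
    (s t : A → V) (R : A → A → Prop) (h : IsGentle s t R)
    (hacyc : ∀ l : List A, ∀ hl : IsRAPath s t R l,
      ¬ (t (l.getLast hl.1) = s (l.head hl.1) ∧ ¬ R (l.getLast hl.1) (l.head hl.1))) :
    ∀ a : A, ∃! l : List A, IsMaximalRAPath s t R l ∧ a ∈ l := by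
  classical
  cases nonempty_fintype A
  set r : A → A → Prop := fun a b => t a = s b ∧ ¬ R a b with hr_def
  have hsucc : ∀ ⦃a b b'⦄, r a b → r a b' → b = b' := fun a b b' hb hb' =>
    h.unique_nonrel_post a hb hb'
  have hpred : ∀ ⦃a b b'⦄, (flip r) a b → (flip r) a b' → b = b' := fun a b b' hb hb' =>
    h.unique_nonrel_pre a hb hb'
  -- every relation-avoiding chain has no duplicates
  have hnodup : ∀ l : List A, l.Chain' r → l.Nodup := by
    intro l hl
    by_contra hnd
    obtain ⟨b, hb⟩ := List.exists_duplicate_iff_not_nodup.2 hnd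
    obtain ⟨u, v, w, rfl⟩ := split_pair b _ (List.duplicate_iff_sublist.mp hb)
    have hsuffix : ((b :: v) ++ b :: w).Chain' r := hl.suffix ⟨u, by simp⟩
    have hinf : (b :: v).Chain' r := hsuffix.prefix ⟨b :: w, rfl⟩
    have hra : IsRAPath s t R (b :: v) := ⟨List.cons_ne_nil _ _, hinf⟩
    have hlastmem : (b :: v).getLast (List.cons_ne_nil _ _) ∈ (b :: v).getLast? := by
      rw [List.getLast?_eq_getLast (List.cons_ne_nil _ _)]; rfl
    have hlast : r ((b :: v).getLast (List.cons_ne_nil _ _)) b :=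
      (List.isChain_append.1 hsuffix).2.2 _ hlastmem b rfl
    exact hacyc (b :: v) hra hlast
  have hlen : ∀ l : List A, l.Chain' r → l.length ≤ Fintype.card A :=
    fun l hl => (hnodup l hl).length_le_card
  -- extension to a maximal path
  have extend : ∀ (n : ℕ) (l : List A), IsRAPath s t R l →
      Fintype.card A ≤ l.length + n → ∃ u v, IsMaximalRAPath s t R (u ++ l ++ v) := by
    intro n
    induction n with
    | zero =>
      intro l hl hcard
      refine ⟨[], [], ?_⟩
      rw [List.nil_append, List.append_nil]
      refine ⟨hl, fun b hb => ?_, fun b hb => ?_⟩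
      · have := hlen _ hb.2
        simp only [List.length_append, List.length_cons, List.length_nil] at this
        omega
      · have := hlen _ hb.2
        simp only [List.length_cons] at this
        omega
    | succ n ih =>
      intro l hl hcard
      by_cases hmax : IsMaximalRAPath s t R l
      · exact ⟨[], [], by simpa using hmax⟩
      · by_cases hfwd : ∃ b, IsRAPath s t R (l ++ [b])
        · obtain ⟨b, hb⟩ := hfwd
          obtain ⟨u, v, huv⟩ := ih (l ++ [b]) hb
            (by simp only [List.length_append, List.length_cons, List.length_nil]; omega)
          exact ⟨u, b :: v, by simpa [List.append_assoc] using huv⟩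
        · by_cases hbwd : ∃ b, IsRAPath s t R (b :: l)
          · obtain ⟨b, hb⟩ := hbwd
            obtain ⟨u, v, huv⟩ := ih (b :: l) hb
              (by simp only [List.length_cons]; omega)
            exact ⟨u ++ [b], v, by simpa [List.append_assoc] using huv⟩
          · push_neg at hfwd hbwd
            exact absurd ⟨hl, hfwd, hbwd⟩ hmax
  -- maximality transfer lemmas
  have hNoFwd : ∀ l : List A, IsRAPath s t R l → (∀ b, ¬ IsRAPath s t R (l ++ [b])) →
      ∀ x, l.getLast? = some x → ∀ b, ¬ r x b := by
    intro l hl hm x hx b hrb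
    refine hm b ⟨by simp, hl.2.append (List.isChain_singleton b) ?_⟩
    intro y hy z hz
    rw [hx, Option.mem_some_iff] at hy
    simp only [List.head?_cons, Option.mem_some_iff] at hz
    subst hy; subst hz
    exact hrb
  have hNoBwd : ∀ l : List A, IsRAPath s t R l → (∀ b, ¬ IsRAPath s t R (b :: l)) →
      ∀ x, l.head? = some x → ∀ b, ¬ r b x := by
    intro l hl hm x hx b hrb
    refine hm b ⟨List.cons_ne_nil _ _, hl.2.cons ?_⟩
    intro y hy
    rw [hx, Option.mem_some_iff] at hy
    subst hy
    exact hrb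
  -- uniqueness
  have huniq : ∀ a : A, ∀ l₁ l₂, IsMaximalRAPath s t R l₁ → a ∈ l₁ →
      IsMaximalRAPath s t R l₂ → a ∈ l₂ → l₁ = l₂ := by
    intro a l₁ l₂ h₁ ha₁ h₂ ha₂
    obtain ⟨u₁, v₁, rfl⟩ := List.append_of_mem ha₁
    obtain ⟨u₂, v₂, rfl⟩ := List.append_of_mem ha₂
    have hc₁ : (a :: v₁).Chain' r := h₁.1.2.suffix ⟨u₁, rfl⟩
    have hc₂ : (a :: v₂).Chain' r := h₂.1.2.suffix ⟨u₂, rfl⟩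
    have hm₁ : ∀ x, (a :: v₁).getLast? = some x → ∀ b, ¬ r x b := fun x hx =>
      hNoFwd _ h₁.1 h₁.2.1 x (by rw [List.getLast?_append_cons]; exact hx)
    have hm₂ : ∀ x, (a :: v₂).getLast? = some x → ∀ b, ¬ r x b := fun x hx =>
      hNoFwd _ h₂.1 h₂.2.1 x (by rw [List.getLast?_append_cons]; exact hx)
    have hv : v₁ = v₂ := maxchain_unique r hsucc v₁ v₂ a hc₁ hc₂ hm₁ hm₂
    -- backward part via reversal
    have hrev₁ : (u₁ ++ a :: v₁).reverse = v₁.reverse ++ a :: u₁.reverse := by simp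
    have hrev₂ : (u₂ ++ a :: v₂).reverse = v₂.reverse ++ a :: u₂.reverse := by simp
    have hcr₁ : (a :: u₁.reverse).Chain' (flip r) := by
      have : ((u₁ ++ a :: v₁).reverse).Chain' (flip r) :=
        (List.isChain_reverse (l := u₁ ++ a :: v₁)).2 h₁.1.2
      rw [hrev₁] at this
      exact this.suffix ⟨v₁.reverse, rfl⟩
    have hcr₂ : (a :: u₂.reverse).Chain' (flip r) := by
      have : ((u₂ ++ a :: v₂).reverse).Chain' (flip r) :=
        (List.isChain_reverse (l := u₂ ++ a :: v₂)).2 h₂.1.2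
      rw [hrev₂] at this
      exact this.suffix ⟨v₂.reverse, rfl⟩
    have hmr₁ : ∀ x, (a :: u₁.reverse).getLast? = some x → ∀ b, ¬ (flip r) x b := by
      intro x hx b
      refine hNoBwd _ h₁.1 h₁.2.2 x ?_ b
      rw [List.head?_eq_getLast?_reverse, hrev₁, List.getLast?_append_cons]
      exact hx
    have hmr₂ : ∀ x, (a :: u₂.reverse).getLast? = some x → ∀ b, ¬ (flip r) x b := by
      intro x hx b
      refine hNoBwd _ h₂.1 h₂.2.2 x ?_ b
      rw [List.head?_eq_getLast?_reverse, hrev₂, List.getLast?_append_cons]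
      exact hx
    have hu : u₁.reverse = u₂.reverse :=
      maxchain_unique (flip r) hpred u₁.reverse u₂.reverse a hcr₁ hcr₂ hmr₁ hmr₂
    rw [hv, List.reverse_injective hu]
  intro a
  obtain ⟨u, v, huv⟩ := extend (Fintype.card A) [a]
    ⟨List.cons_ne_nil _ _, List.isChain_singleton a⟩
    (by simp only [List.length_cons, List.length_nil]; omega)
  refine ⟨u ++ [a] ++ v, ⟨huv, by simp⟩, ?_⟩
  rintro l' ⟨hl', ha'⟩
  exact huniq a l' _ hl' ha' huv (by simp)
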